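/- arXiv:2003.07551 — 2 statements merged into one kernel-verified Lean document; each statement's English description precedes it below -/
import Mathlib

section
/- For M sufficiently large (depending only on h) there exists a constant c > 0, depending only on h and M, such that under the standing orbit hypotheses (fat region) with ℓ ≥ 1: |x_ℓ| ≥ c E_ℓ^{1/4}. -/
noncomputable section

open Real MeasureTheory

section helpers

lemma mono_le' {g g' : ℝ → ℝ} {a b : ℝ} (hab : a ≤ b)
    (hd : ∀ t, HasDerivAt g (g' t) t)
    (hnn : ∀ t ∈ Set.Icc a b, 0 ≤ g' t) : g a ≤ g b := by
  have hdiff : Differentiable ℝ g := fun t => (hd t).differentiableAt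
  have hmono : MonotoneOn g (Set.Icc a b) := by
    apply monotoneOn_of_deriv_nonneg (convex_Icc a b) hdiff.continuous.continuousOn
      (hdiff.differentiableOn)
    intro t ht
    rw [(hd t).deriv]
    exact hnn t (interior_subset ht)
  exact hmono ⟨le_rfl, hab⟩ ⟨hab, le_rfl⟩ hab

lemma poly_bound_nonneg' {f f' : ℝ → ℝ} {C : ℝ} (n : ℕ)
    (hd : ∀ t, HasDerivAt f (f' t) t) (h0 : f 0 = 0)
    (hb : ∀ t, |t| ≤ 1 → |f' t| ≤ C * |t| ^ n) :
    ∀ x, 0 ≤ x → x ≤ 1 → |f x| ≤ C / (n + 1) * x ^ (n + 1) := by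
  intro x hx0 hx1
  have hpow : ∀ t : ℝ, HasDerivAt (fun s => C / (n + 1) * s ^ (n + 1)) (C * t ^ n) t := by
    intro t
    have h1 := (hasDerivAt_pow (n + 1) t).const_mul (C / ((n : ℝ) + 1))
    refine h1.congr_deriv ?_
    have : ((n : ℝ) + 1) ≠ 0 := by positivity
    push_cast
    field_simp
  have key : ∀ t ∈ Set.Icc (0:ℝ) x, |f' t| ≤ C * t ^ n := by
    intro t ht
    have h1 : |t| ≤ 1 := by
      rw [abs_of_nonneg ht.1]; linarith [ht.2]
    have := hb t h1
    rwa [abs_of_nonneg ht.1] at this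
  have hub : f x ≤ C / (n + 1) * x ^ (n + 1) := by
    have := mono_le' (g := fun s => C / (n + 1) * s ^ (n + 1) - f s)
      (g' := fun t => C * t ^ n - f' t) hx0
      (fun t => (hpow t).sub (hd t))
      (fun t ht => by
        have h2 := abs_le.mp (key t ht)
        show 0 ≤ C * t ^ n - f' t
        linarith [h2.2])
    simp only [h0, zero_pow (Nat.succ_ne_zero n), mul_zero, sub_zero, add_zero] at this
    linarith [this]
  have hlb : -(C / (n + 1) * x ^ (n + 1)) ≤ f x := by
    have := mono_le' (g := fun s => C / (n + 1) * s ^ (n + 1) + f s)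
      (g' := fun t => C * t ^ n + f' t) hx0
      (fun t => (hpow t).add (hd t))
      (fun t ht => by
        have h2 := abs_le.mp (key t ht)
        show 0 ≤ C * t ^ n + f' t
        linarith [h2.1])
    simp only [h0, zero_pow (Nat.succ_ne_zero n), mul_zero, sub_zero, add_zero] at this
    linarith [this]
  exact abs_le.mpr ⟨hlb, hub⟩

lemma poly_bound' {f f' : ℝ → ℝ} {C : ℝ} (n : ℕ)
    (hd : ∀ t, HasDerivAt f (f' t) t) (h0 : f 0 = 0)
    (hb : ∀ t, |t| ≤ 1 → |f' t| ≤ C * |t| ^ n) :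
    ∀ x, |x| ≤ 1 → |f x| ≤ C / (n + 1) * |x| ^ (n + 1) := by
  intro x hx
  rcases le_or_gt 0 x with hx0 | hx0
  · rw [abs_of_nonneg hx0]
    exact poly_bound_nonneg' n hd h0 hb x hx0 (by rwa [abs_of_nonneg hx0] at hx)
  · have hF : ∀ t : ℝ, HasDerivAt (fun s => f (-s)) (-f' (-t)) t := by
      intro t
      have := (hd (-t)).comp t (hasDerivAt_neg t)
      simpa [mul_comm, Function.comp_def] using this
    have hFb : ∀ t : ℝ, |t| ≤ 1 → |(fun s => -f' (-s)) t| ≤ C * |t| ^ n := by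
      intro t ht
      simp only [abs_neg]
      have := hb (-t) (by rwa [abs_neg])
      rwa [abs_neg] at this
    have := poly_bound_nonneg' n hF (by simpa using h0) hFb (-x) (by linarith) (by
      rw [abs_of_neg hx0] at hx; linarith)
    rw [abs_of_neg hx0]
    simpa using this

end helpers

/-- The map `T(x,y) = (x + h(x) + y, h(x) + y)` in local coordinates
(lift of the torus map to `ℝ²`). -/
def Tmap (h : ℝ → ℝ) (p : ℝ × ℝ) : ℝ × ℝ :=
  (p.1 + h p.1 + p.2, h p.1 + p.2)

/-- `G(x) = ∫₀ˣ h(z) dz`. -/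
def Gfun (h : ℝ → ℝ) (x : ℝ) : ℝ := ∫ z in (0:ℝ)..x, h z

/-- The quasi-Hamiltonian
`H(x,y) = ½y² − G(x) + ½h(x)y − (1/12)h'(x)y² + (1/12)h(x)²`. -/
def Hham (h : ℝ → ℝ) (p : ℝ × ℝ) : ℝ :=
  (1/2) * p.2 ^ 2 - Gfun h p.1 + (1/2) * h p.1 * p.2
    - (1/12) * deriv h p.1 * p.2 ^ 2 + (1/12) * (h p.1) ^ 2

/-- The fat region `P_M = {(x,y) : M x⁴ ≤ H(x,y), x ≤ 0, y ≥ 0}`. -/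
def PM (h : ℝ → ℝ) (M : ℝ) : Set (ℝ × ℝ) :=
  {q | M * q.1 ^ 4 ≤ Hham h q ∧ q.1 ≤ 0 ∧ 0 ≤ q.2}

/-- The orbit of a point under `T`. -/
def orb (h : ℝ → ℝ) (p : ℝ × ℝ) (k : ℕ) : ℝ × ℝ := (Tmap h)^[k] p

/-- `x_k`, the first coordinate of the orbit. -/
def Xc (h : ℝ → ℝ) (p : ℝ × ℝ) (k : ℕ) : ℝ := (orb h p k).1

/-- `y_k`, the second coordinate of the orbit. -/
def Yc (h : ℝ → ℝ) (p : ℝ × ℝ) (k : ℕ) : ℝ := (orb h p k).2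

/-- `E_k = H(x_k, y_k)`. -/
def En (h : ℝ → ℝ) (p : ℝ × ℝ) (k : ℕ) : ℝ := Hham h (orb h p k)

/-- Standing orbit hypotheses (fat region): the orbit stays in the
`δ`-neighborhood of `(0,0)` for `0 ≤ k ≤ n+1`, has `x_k ≤ 0` for `0 ≤ k ≤ n`,
`x_{n+1} > 0`, lies in `P_M` for `ℓ ≤ k ≤ n`, and (if `ℓ ≥ 1`) is not in `P_M`
at time `ℓ - 1`. -/
def FatOrbit (h : ℝ → ℝ) (M δ : ℝ) (p : ℝ × ℝ) (ℓ n : ℕ) : Prop :=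
  ℓ ≤ n ∧
  (∀ k ≤ n + 1, |Xc h p k| ≤ δ ∧ |Yc h p k| ≤ δ) ∧
  (∀ k ≤ n, Xc h p k ≤ 0) ∧
  0 < Xc h p (n + 1) ∧
  (∀ k, ℓ ≤ k → k ≤ n → orb h p k ∈ PM h M) ∧
  (1 ≤ ℓ → orb h p (ℓ - 1) ∉ PM h M)

set_option maxHeartbeats 1600000 in
/-- Along a fat-region orbit with `ℓ ≥ 1`, `|x_ℓ| ≥ c E_ℓ^{1/4}`. -/
theorem fat_x_ell_lower (h : ℝ → ℝ) (hsm : ContDiff ℝ (⊤ : ℕ∞) h) (h0 : h 0 = 0)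
    (hd1 : deriv h 0 = 0) (hpos : ∀ x : ℝ, x ≠ 0 → 0 < deriv h x)
    (hd3 : 0 < iteratedDeriv 3 h 0) (hodd : ∀ x : ℝ, h (-x) = -h x) :
    ∃ M₀ > (0:ℝ), ∀ M : ℝ, M₀ ≤ M → ∃ c > (0:ℝ), ∃ δ > (0:ℝ),
      ∀ (p : ℝ × ℝ) (ℓ n : ℕ), FatOrbit h M δ p ℓ n → 1 ≤ ℓ →
        c * (En h p ℓ) ^ ((1:ℝ)/4) ≤ |Xc h p ℓ| := by
  -- derivative chain
  have hsm0 : ContDiff ℝ ((⊤:ℕ∞):WithTop ℕ∞) h := hsm.of_le (by simp)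
  have hdiff : Differentiable ℝ h := hsm0.differentiable (by simp)
  set f1 := deriv h with hf1def
  have hsm1 : ContDiff ℝ ((⊤:ℕ∞):WithTop ℕ∞) f1 := (contDiff_infty_iff_deriv.mp hsm0).2
  have hdiff1 : Differentiable ℝ f1 := hsm1.differentiable (by simp)
  set f2 := deriv f1 with hf2def
  have hsm2 : ContDiff ℝ ((⊤:ℕ∞):WithTop ℕ∞) f2 := (contDiff_infty_iff_deriv.mp hsm1).2
  have hdiff2 : Differentiable ℝ f2 := hsm2.differentiable (by simp)
  set f3 := deriv f2 with hf3def
  have hsm3 : ContDiff ℝ ((⊤:ℕ∞):WithTop ℕ∞) f3 := (contDiff_infty_iff_deriv.mp hsm2).2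
  have hdh : ∀ t, HasDerivAt h (f1 t) t := fun t => (hdiff t).hasDerivAt
  have hdf1 : ∀ t, HasDerivAt f1 (f2 t) t := fun t => (hdiff1 t).hasDerivAt
  have hdf2 : ∀ t, HasDerivAt f2 (f3 t) t := fun t => (hdiff2 t).hasDerivAt
  -- evenness of f1, f2 0 = 0
  have heven : ∀ x, f1 (-x) = f1 x := by
    intro x
    have h1 : HasDerivAt (fun s => h (-s)) (-f1 (-x)) x := by
      have := (hdh (-x)).comp x (hasDerivAt_neg x)
      simpa [mul_comm, Function.comp_def] using this
    have h3 : (fun s => h (-s)) = (fun s => -h s) := funext hodd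
    rw [h3] at h1
    have h2 : HasDerivAt (fun s => -h s) (-f1 x) x := (hdh x).neg
    have := h1.unique h2
    linarith
  have hf20 : f2 0 = 0 := by
    have h1 : HasDerivAt (fun s => f1 (-s)) (-f2 (-0)) 0 := by
      have := (hdf1 (-(0:ℝ))).comp (0:ℝ) (hasDerivAt_neg (0:ℝ))
      simpa [mul_comm, Function.comp_def] using this
    have h3 : (fun s => f1 (-s)) = f1 := funext heven
    rw [h3] at h1
    have := h1.unique (hdf1 0)
    simp at this
    linarith
  -- bound on f3 on [-1,1]
  obtain ⟨K0, hK0⟩ := (isCompact_Icc (a := (-1:ℝ)) (b := 1)).exists_bound_of_continuousOn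
    ((hsm3.differentiable (by simp)).continuous.continuousOn)
  set K := max K0 0 with hKdef
  have hK : ∀ x : ℝ, |x| ≤ 1 → |f3 x| ≤ K := by
    intro x hx
    exact le_trans (hK0 x (abs_le.mp hx)) (le_max_left _ _)
  have hKnn : 0 ≤ K := le_max_right _ _
  -- cubic bounds
  have hb2 : ∀ x : ℝ, |x| ≤ 1 → |f2 x| ≤ K * |x| := by
    intro x hx
    have := poly_bound' 0 hdf2 hf20 (fun t ht => by simpa using hK t ht) x hx
    push_cast at this
    norm_num at this
    linarith [this]
  have hb1 : ∀ x : ℝ, |x| ≤ 1 → |f1 x| ≤ K / 2 * |x| ^ 2 := by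
    intro x hx
    have := poly_bound' (C := K) 1 hdf1 hd1
      (fun t ht => by simpa [pow_one] using hb2 t ht) x hx
    push_cast at this
    norm_num at this
    calc |f1 x| ≤ K / 2 * x ^ 2 := this
      _ = K / 2 * |x| ^ 2 := by rw [sq_abs]
  have hb0 : ∀ x : ℝ, |x| ≤ 1 → |h x| ≤ K / 6 * |x| ^ 3 := by
    intro x hx
    have := poly_bound' (C := K / 2) 2 hdh h0 hb1 x hx
    push_cast at this
    norm_num at this
    calc |h x| ≤ K / 2 / 3 * |x| ^ 3 := this
      _ = K / 6 * |x| ^ 3 := by ring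
  -- G facts
  have hGd : ∀ t : ℝ, HasDerivAt (Gfun h) (h t) t := fun t =>
    intervalIntegral.integral_hasDerivAt_right (hsm0.continuous.intervalIntegrable _ _)
      (hsm0.continuous.stronglyMeasurableAtFilter _ _) hsm0.continuous.continuousAt
  have hG0 : Gfun h 0 = 0 := intervalIntegral.integral_same
  have hbG : ∀ x : ℝ, |x| ≤ 1 → |Gfun h x| ≤ K / 24 * |x| ^ 4 := by
    intro x hx
    have := poly_bound' (C := K / 6) 3 hGd hG0 hb0 x hx
    push_cast at this
    norm_num at this
    calc |Gfun h x| ≤ K / 6 / 4 * |x| ^ 4 := this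
      _ = K / 24 * |x| ^ 4 := by ring
  -- sign facts
  have hf1nn : ∀ x : ℝ, 0 ≤ f1 x := by
    intro x
    rcases eq_or_ne x 0 with rfl | hx
    · exact le_of_eq hd1.symm
    · exact (hpos x hx).le
  have hmono : Monotone h := monotone_of_deriv_nonneg hdiff hf1nn
  have hneg : ∀ x : ℝ, x ≤ 0 → h x ≤ 0 := fun x hx => by
    have := hmono hx; rwa [h0] at this
  have hGnn : ∀ x : ℝ, x ≤ 0 → 0 ≤ Gfun h x := by
    intro x hx
    have h1 : 0 ≤ ∫ z in x..(0:ℝ), -h z :=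
      intervalIntegral.integral_nonneg hx (fun u hu => by linarith [hneg u hu.2])
    rw [intervalIntegral.integral_neg] at h1
    have h2 : Gfun h x = -(∫ z in x..(0:ℝ), h z) := by
      rw [Gfun]
      exact intervalIntegral.integral_symm x 0
    rw [h2]
    linarith
  -- main construction
  refine ⟨1, one_pos, fun M hM => ?_⟩
  set B := 3 * M + K + K ^ 2 + 1 with hBdef
  have hB1 : 1 ≤ B := by nlinarith
  set C4 := 8 * B + K ^ 2 + 1 with hC4def
  have hC4pos : 0 < C4 := by nlinarith
  set δ := min 1 (min (1 / (K + 1)) (1 / (2 * (B + 1)))) with hδdef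
  have hδpos : 0 < δ := by
    apply lt_min one_pos
    apply lt_min <;> positivity
  have hδ1 : δ ≤ 1 := min_le_left _ _
  have hδK : K * δ ^ 2 ≤ 1 := by
    have h1 : δ ≤ 1 / (K + 1) := le_trans (min_le_right _ _) (min_le_left _ _)
    have h2 : K * δ ≤ 1 := by
      calc K * δ ≤ K * (1 / (K + 1)) := by
              apply mul_le_mul_of_nonneg_left h1 hKnn
           _ ≤ 1 := by
              rw [mul_one_div, div_le_one (by positivity)]; linarith
    nlinarith [hδpos.le]
  have hδB : B * δ ^ 2 ≤ 1 / 4 := by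
    have h1 : δ ≤ 1 / (2 * (B + 1)) := le_trans (min_le_right _ _) (min_le_right _ _)
    have h2 : B * δ ≤ 1 / 2 := by
      calc B * δ ≤ B * (1 / (2 * (B + 1))) := by
              apply mul_le_mul_of_nonneg_left h1 (by linarith)
           _ ≤ 1 / 2 := by
              rw [mul_one_div, div_le_div_iff₀ (by positivity) (by norm_num)]; linarith
    nlinarith [hδpos.le, hδ1]
  refine ⟨(C4 ^ ((1:ℝ)/4))⁻¹, inv_pos.mpr (Real.rpow_pos_of_pos hC4pos _), δ, hδpos, ?_⟩
  intro p ℓ n hfat hℓ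
  obtain ⟨hln, hδb, hxneg, hxpos, hPM, hnot⟩ := hfat
  -- step relation
  have hstep : orb h p ℓ = Tmap h (orb h p (ℓ - 1)) := by
    conv_lhs => rw [show ℓ = (ℓ - 1) + 1 by omega]
    rw [orb, Function.iterate_succ_apply']
    rfl
  set x := (orb h p (ℓ - 1)).1 with hxdef
  set y := (orb h p (ℓ - 1)).2 with hydef
  set XL := Xc h p ℓ with hXLdef
  set YL := Yc h p ℓ with hYLdef
  set E := En h p ℓ with hEdef
  have hXl : XL = x + h x + y := by rw [hXLdef, Xc, hstep]; rfl
  have hYl : YL = h x + y := by rw [hYLdef, Yc, hstep]; rfl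
  -- basic facts
  have hxle : x ≤ 0 := hxneg (ℓ - 1) (by omega)
  have hxlle : XL ≤ 0 := hxneg ℓ hln
  have hxabs : |x| ≤ δ := (hδb (ℓ - 1) (by omega)).1
  have hxabs1 : |x| ≤ 1 := le_trans hxabs hδ1
  have hmem : orb h p ℓ ∈ PM h M := hPM ℓ le_rfl hln
  obtain ⟨hmem1, hmem2, hmem3⟩ := hmem
  have hmemE : M * XL ^ 4 ≤ E := hmem1
  have hYLnn : (0:ℝ) ≤ YL := hmem3
  have hxlabs : |XL| ≤ 1 := le_trans (hδb ℓ (by omega)).1 hδ1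
  have hhx : h x ≤ 0 := hneg x hxle
  have hynn : 0 ≤ y := by
    have : 0 ≤ h x + y := by rw [← hYl]; exact hYLnn
    linarith
  have hEnot : (1/2) * y ^ 2 - Gfun h x + (1/2) * h x * y - (1/12) * f1 x * y ^ 2
      + (1/12) * (h x) ^ 2 < M * x ^ 4 := by
    have hcon : Hham h (orb h p (ℓ - 1)) < M * x ^ 4 := by
      by_contra hcon
      push_neg at hcon
      exact (hnot hℓ) ⟨hcon, hxle, hynn⟩
    exact hcon
  have hEexp : E = (1/2) * YL ^ 2 - Gfun h XL + (1/2) * h XL * YL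
      - (1/12) * f1 XL * YL ^ 2 + (1/12) * (h XL) ^ 2 := rfl
  -- make everything opaque and drop orbit data
  clear_value x y XL YL E K B C4 δ
  clear hδb hxneg hxpos hPM hnot hstep hmem1 hmem2 hmem3 hln hxdef hydef hXLdef hYLdef hEdef
  clear hdh hdf1 hdf2 heven hf20 hK0 hb2 hG0 hGd hsm hsm0 hsm1 hsm2 hsm3 hdiff hdiff1 hdiff2 hd3 hodd hmono
  -- bounds at x
  have hx4nn : (0:ℝ) ≤ x ^ 4 := by positivity
  have hXL4nn : (0:ℝ) ≤ XL ^ 4 := by positivity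
  have hGub : Gfun h x ≤ K / 24 * x ^ 4 := by
    have h4 : |x| ^ 4 = x ^ 4 := by rw [← abs_pow, abs_of_nonneg hx4nn]
    calc Gfun h x ≤ |Gfun h x| := le_abs_self _
      _ ≤ K / 24 * |x| ^ 4 := hbG x hxabs1
      _ = K / 24 * x ^ 4 := by rw [h4]
  have hhxb : |h x| ≤ K / 6 * |x| ^ 3 := hb0 x hxabs1
  have hf1b : f1 x ≤ K / 2 * x ^ 2 := by
    calc f1 x ≤ |f1 x| := le_abs_self _
      _ ≤ K / 2 * |x| ^ 2 := hb1 x hxabs1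
      _ = K / 2 * x ^ 2 := by rw [sq_abs]
  -- step (i): y^2 ≤ B x^4
  have hyB : y ^ 2 ≤ B * x ^ 4 := by
    have hx3 : |x| ^ 3 ≤ x ^ 2 := by
      calc |x| ^ 3 = |x| * |x| ^ 2 := by ring
        _ ≤ 1 * |x| ^ 2 := mul_le_mul_of_nonneg_right hxabs1 (by positivity)
        _ = x ^ 2 := by rw [one_mul, sq_abs]
    have e2 : -((1/2) * h x * y) ≤ K / 12 * x ^ 2 * y := by
      have e21 : -h x ≤ K / 6 * |x| ^ 3 := by
        have := (abs_le.mp hhxb).1; linarith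
      have e22 : K / 6 * |x| ^ 3 ≤ K / 6 * x ^ 2 :=
        mul_le_mul_of_nonneg_left hx3 (by linarith [hKnn])
      have e23 : (-h x) * y ≤ K / 6 * x ^ 2 * y :=
        mul_le_mul_of_nonneg_right (le_trans e21 e22) hynn
      linarith [e23]
    have e3 : (1/12) * f1 x * y ^ 2 ≤ (1/24) * y ^ 2 := by
      have hx2 : x ^ 2 ≤ δ ^ 2 := by
        rw [← sq_abs x]
        exact pow_le_pow_left₀ (abs_nonneg x) hxabs 2
      have e31 : f1 x ≤ 1 / 2 := by
        have hp := mul_nonneg hKnn (by linarith [hx2] : (0:ℝ) ≤ δ ^ 2 - x ^ 2)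
        nlinarith [hf1b, hδK, hp]
      have hp2 := mul_nonneg (by linarith [e31] : (0:ℝ) ≤ 1/2 - f1 x) (sq_nonneg y)
      nlinarith [hp2, hf1nn x]
    have e4 : K / 12 * x ^ 2 * y ≤ K ^ 2 / 48 * x ^ 4 + 1 / 12 * y ^ 2 := by
      nlinarith [sq_nonneg (K * x ^ 2 - 2 * y)]
    have hGx := hGnn x hxle
    have hsq := sq_nonneg (h x)
    rw [hBdef]
    have p1 := mul_nonneg (by linarith [hM] : (0:ℝ) ≤ M - 1) hx4nn
    have p2 := mul_nonneg hKnn hx4nn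
    have p3 := mul_nonneg (sq_nonneg K) hx4nn
    linarith [hEnot, e2, e3, e4, hGub, hGx, hsq, hx4nn, p1, p2, p3]
  -- step (ii): 2 y ≤ -x
  have hy2 : 2 * y ≤ -x := by
    have hx2 : x ^ 2 ≤ δ ^ 2 := by
      rw [← sq_abs x]
      exact pow_le_pow_left₀ (abs_nonneg x) hxabs 2
    have hB0 : (0:ℝ) ≤ B := by linarith
    have h1 : y ^ 2 ≤ B * δ ^ 2 * x ^ 2 := by
      calc y ^ 2 ≤ B * x ^ 4 := hyB
        _ = B * x ^ 2 * x ^ 2 := by ring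
        _ ≤ B * δ ^ 2 * x ^ 2 := by
            apply mul_le_mul_of_nonneg_right _ (sq_nonneg x)
            exact mul_le_mul_of_nonneg_left hx2 hB0
    have h2 : (2 * y) ^ 2 ≤ (-x) ^ 2 := by
      have hp := mul_le_mul_of_nonneg_right hδB (sq_nonneg x)
      nlinarith [h1, hp]
    have := (pow_le_pow_iff_left₀ (by linarith) (by linarith) two_ne_zero).mp h2
    linarith
  -- step (iii): -x ≤ 2 * (-XL)
  have hx2xl : -x ≤ 2 * (-XL) := by
    rw [hXl]; linarith
  -- step (iv): YL^2 ≤ 16 B XL^4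
  have hYlB : YL ^ 2 ≤ 16 * B * XL ^ 4 := by
    have hB0 : (0:ℝ) ≤ B := by linarith
    have h1 : YL ≤ y := by rw [hYl]; linarith
    have h2 : YL ^ 2 ≤ y ^ 2 := by
      have hp := mul_nonneg (by linarith : (0:ℝ) ≤ y - YL) (by linarith : (0:ℝ) ≤ y + YL)
      nlinarith [hp]
    have h3 : x ^ 4 ≤ 16 * XL ^ 4 := by
      have h4 : (-x) ^ 4 ≤ (2 * (-XL)) ^ 4 :=
        pow_le_pow_left₀ (by linarith) hx2xl 4
      linarith [h4, sq_nonneg x, sq_nonneg XL]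
    calc YL ^ 2 ≤ y ^ 2 := h2
      _ ≤ B * x ^ 4 := hyB
      _ ≤ B * (16 * XL ^ 4) := mul_le_mul_of_nonneg_left h3 hB0
      _ = 16 * B * XL ^ 4 := by ring
  -- step (v): E ≤ C4 XL^4
  have hEub : E ≤ C4 * XL ^ 4 := by
    have hGl := hGnn _ hxlle
    have hhl : h XL ≤ 0 := hneg _ hxlle
    have hf1l := hf1nn XL
    have hhlb : (h XL) ^ 2 ≤ (K / 6) ^ 2 * XL ^ 4 := by
      have h2 : |h XL| ^ 2 ≤ (K / 6 * |XL| ^ 3) ^ 2 :=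
        pow_le_pow_left₀ (abs_nonneg _) (hb0 _ hxlabs) 2
      have h3 : |XL| ^ 6 ≤ |XL| ^ 4 := by
        apply pow_le_pow_of_le_one (abs_nonneg _) hxlabs
        norm_num
      rw [sq_abs] at h2
      calc (h XL) ^ 2 ≤ (K / 6 * |XL| ^ 3) ^ 2 := h2
        _ = (K / 6) ^ 2 * |XL| ^ 6 := by ring
        _ ≤ (K / 6) ^ 2 * |XL| ^ 4 := mul_le_mul_of_nonneg_left h3 (by positivity)
        _ = (K / 6) ^ 2 * XL ^ 4 := by
            rw [← abs_pow, abs_of_nonneg hXL4nn]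
    have hYsq := sq_nonneg YL
    rw [hEexp, hC4def]
    have p4 := mul_nonneg (sq_nonneg K) hXL4nn
    linarith [mul_nonneg hf1l hYsq, mul_nonneg (neg_nonneg.mpr hhl) hYLnn,
      hYlB, hGl, hhlb, hXL4nn, p4]
  -- final rpow computation
  have hEnn : (0:ℝ) ≤ E := by
    have p5 := mul_nonneg (by linarith [hM] : (0:ℝ) ≤ M - 1) hXL4nn
    nlinarith [hmemE, hXL4nn, p5]
  have hrw : (XL ^ 4) ^ ((1:ℝ)/4) = |XL| := by
    have h1 : XL ^ 4 = |XL| ^ (4:ℕ) := by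
      rw [← abs_pow, abs_of_nonneg hXL4nn]
    rw [h1, ← Real.rpow_natCast |XL| 4, ← Real.rpow_mul (abs_nonneg _)]
    norm_num
  have hfinal : E ^ ((1:ℝ)/4) ≤ C4 ^ ((1:ℝ)/4) * |XL| := by
    calc E ^ ((1:ℝ)/4) ≤ (C4 * XL ^ 4) ^ ((1:ℝ)/4) :=
          Real.rpow_le_rpow hEnn hEub (by norm_num)
      _ = C4 ^ ((1:ℝ)/4) * (XL ^ 4) ^ ((1:ℝ)/4) :=
          Real.mul_rpow hC4pos.le hXL4nn
      _ = C4 ^ ((1:ℝ)/4) * |XL| := by rw [hrw]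
  have hC4r : 0 < C4 ^ ((1:ℝ)/4) := Real.rpow_pos_of_pos hC4pos _
  calc (C4 ^ ((1:ℝ)/4))⁻¹ * E ^ ((1:ℝ)/4)
      ≤ (C4 ^ ((1:ℝ)/4))⁻¹ * (C4 ^ ((1:ℝ)/4) * |XL|) := by
        apply mul_le_mul_of_nonneg_left hfinal (inv_nonneg.mpr hC4r.le)
    _ = |XL| := by
        field_simp
end
end

section
/- There exist M₀ > 0 and constants c, C, δ > 0 (depending only on h) such that for every M ≥ M₀ and every (x,y) ∈ P'_M with |x| ≤ δ, |y| ≤ δ, one has c x⁴ ≤ |H(x,y)| ≤ C x⁴. -/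
noncomputable section

open Real MeasureTheory
open scoped ContDiff

/-- The thin region `P'_M = {(x,y) : M y² ≤ |H(x,y)|, x ≤ 0, y ≥ 0}`. -/
def PMthin (h : ℝ → ℝ) (M : ℝ) : Set (ℝ × ℝ) :=
  {q | M * q.2 ^ 2 ≤ |Hham h q| ∧ q.1 ≤ 0 ∧ 0 ≤ q.2}

set_option maxHeartbeats 1000000 in
/-- Auxiliary arithmetic endgame lemma. -/
private lemma thin_endgame (a δ x y g b d Hv : ℝ) (hapos : 0 < a) (hδa : a * δ^2 ≤ 1/4)
    (hx0 : x ≤ 0) (hx2δ : x^2 ≤ δ^2)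
    (hg1 : a/48 * x^4 ≤ g) (hg2 : g ≤ a/16 * x^4)
    (hb1 : a/4 * x^3 ≤ b) (hb2 : b ≤ a/12 * x^3)
    (hd1 : a/4 * x^2 ≤ d) (hd2 : d ≤ 3*a/4 * x^2)
    (hy0 : 0 ≤ y) (hy4 : 4 * y^2 ≤ |Hv|)
    (hHeq : Hv = (1/2) * y^2 - g + (1/2) * b * y - (1/12) * d * y^2 + (1/12) * b^2) :
    a/240 * x^4 ≤ |Hv| ∧ |Hv| ≤ a/6 * x^4 := by
  have hx4 : (0:ℝ) ≤ x^4 := by positivity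
  have hax4 : (0:ℝ) ≤ a * x^4 := mul_nonneg hapos.le hx4
  have hx3 : x^3 ≤ 0 := Odd.pow_nonpos (by decide) hx0
  have hax3 : a * x^3 ≤ 0 := by
    have := mul_nonneg hapos.le (neg_nonneg.2 hx3); nlinarith [this]
  have hbneg : b ≤ 0 := by linarith
  have hbsq' : b^2 ≤ (-(a/4 * x^3))^2 := sq_le_sq' (by linarith) (by linarith)
  have hx6 : x^6 ≤ δ^2 * x^4 := by
    calc x^6 = x^2 * x^4 := by ring
    _ ≤ δ^2 * x^4 := mul_le_mul_of_nonneg_right hx2δ hx4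
  have ha2 : a^2/16 * x^6 ≤ a^2/16 * (δ^2 * x^4) :=
    mul_le_mul_of_nonneg_left hx6 (by positivity)
  have ha3 : (a * δ^2) * (a * x^4) ≤ (1/4) * (a * x^4) :=
    mul_le_mul_of_nonneg_right hδa hax4
  have hbsq : b^2 ≤ a/64 * x^4 := by linarith [hbsq', ha2, ha3]
  have haxx : a * x^2 ≤ a * δ^2 := mul_le_mul_of_nonneg_left hx2δ hapos.le
  have hd316 : d ≤ 3/16 := by linarith [hd2, haxx, hδa]
  have hdpos : 0 ≤ d := by linarith [hd1, mul_nonneg hapos.le (sq_nonneg x)]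
  have hby : -((b^2 + y^2)/2) ≤ b * y ∧ b * y ≤ (b^2 + y^2)/2 := by
    constructor <;> nlinarith [sq_nonneg (b + y), sq_nonneg (b - y)]
  have hdy : 0 ≤ d * y^2 ∧ d * y^2 ≤ (3/16) * y^2 :=
    ⟨mul_nonneg hdpos (sq_nonneg y), mul_le_mul_of_nonneg_right hd316 (sq_nonneg y)⟩
  have hEub : Hv + g - (1/12) * b^2 ≤ y^2 + b^2/4 := by
    rw [hHeq]; linarith [hby.2, hdy.1, sq_nonneg y]
  have hElb : -(y^2 + b^2/4) ≤ Hv + g - (1/12) * b^2 := by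
    rw [hHeq]; linarith [hby.1, hdy.2, sq_nonneg y, sq_nonneg b]
  rcases abs_cases Hv with ⟨habs, hsgn⟩ | ⟨habs, hsgn⟩
  · -- Hv ≥ 0 : degenerate, forces x = 0
    rw [habs] at hy4 ⊢
    have hc1 : (3/4) * Hv ≤ -(a/64) * x^4 := by linarith [hEub, hg1, hbsq, hy4]
    have haxneg : a * x^4 ≤ 0 := by linarith
    have hx40 : x^4 ≤ 0 := by nlinarith [haxneg, hapos]
    have hx4e : x^4 = 0 := le_antisymm hx40 hx4
    rw [hx4e]
    exact ⟨by simpa using hsgn, by rw [hx4e] at hc1; linarith [hc1]⟩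
  · -- Hv < 0 : main case
    rw [habs] at hy4 ⊢
    constructor
    · linarith [hEub, hg1, hbsq, hy4, sq_nonneg b]
    · linarith [hElb, hg2, hbsq, hy4, hax4, sq_nonneg b]

set_option maxHeartbeats 1000000 in
/-- For `M` large, in `P'_M` one has `|H(x,y)| ≍ x⁴`. -/
theorem thin_H_comparable_x_four (h : ℝ → ℝ) (hsm : ContDiff ℝ (⊤ : ℕ∞) h) (h0 : h 0 = 0)
    (hd1 : deriv h 0 = 0) (hpos : ∀ x : ℝ, x ≠ 0 → 0 < deriv h x)
    (hd3 : 0 < iteratedDeriv 3 h 0) (hodd : ∀ x : ℝ, h (-x) = -h x) :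
    ∃ M₀ > (0:ℝ), ∃ c > (0:ℝ), ∃ C > (0:ℝ), ∃ δ > (0:ℝ),
      ∀ M : ℝ, M₀ ≤ M → ∀ x y : ℝ,
        (x, y) ∈ PMthin h M → |x| ≤ δ → |y| ≤ δ →
          c * x ^ 4 ≤ |Hham h (x, y)| ∧ |Hham h (x, y)| ≤ C * x ^ 4 := by
  have hsm0 : ContDiff ℝ ∞ h := hsm.of_le (by simp)
  set h1 : ℝ → ℝ := deriv h with hh1
  set h2 : ℝ → ℝ := deriv h1 with hh2
  have hsm1 : ContDiff ℝ ∞ h1 := (contDiff_infty_iff_deriv.mp hsm0).2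
  have hsm2 : ContDiff ℝ ∞ h2 := (contDiff_infty_iff_deriv.mp hsm1).2
  have hdiffh : Differentiable ℝ h := hsm0.differentiable (by norm_num)
  have hdiff1 : Differentiable ℝ h1 := hsm1.differentiable (by norm_num)
  have hdiff2 : Differentiable ℝ h2 := hsm2.differentiable (by norm_num)
  -- h1 is even
  have h1even : ∀ x : ℝ, h1 (-x) = h1 x := by
    intro x
    have e1 : (fun x : ℝ => h (-x)) = (fun x : ℝ => -h x) := funext hodd
    have e2 : deriv (fun x : ℝ => h (-x)) x = -h1 (-x) := deriv_comp_neg h x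
    have e3 : deriv (fun x : ℝ => -h x) x = -h1 x := by
      rw [deriv.fun_neg]
    rw [e1, e3] at e2
    linarith
  -- h2 0 = 0
  have h20 : h2 0 = 0 := by
    have e1 : (fun x : ℝ => h1 (-x)) = h1 := funext h1even
    have e2 : deriv (fun x : ℝ => h1 (-x)) 0 = -h2 (-0) := deriv_comp_neg h1 0
    rw [e1] at e2
    simp only [neg_zero] at e2
    have : h2 0 = deriv h1 0 := rfl
    linarith [e2]
  -- the third derivative
  set a : ℝ := iteratedDeriv 3 h 0 with ha
  have haval : a = deriv h2 0 := by
    rw [ha, iteratedDeriv_succ, iteratedDeriv_succ, iteratedDeriv_one]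
  have hapos : 0 < a := hd3
  -- slope bounds for h2 near 0
  have hslope : Filter.Tendsto (slope h2 0) (nhdsWithin 0 {(0:ℝ)}ᶜ) (nhds a) := by
    rw [haval]
    exact hasDerivAt_iff_tendsto_slope.mp (hdiff2 0).hasDerivAt
  have hball : ∀ᶠ z in nhdsWithin 0 {(0:ℝ)}ᶜ, |slope h2 0 z - a| < a / 2 := by
    have : Set.Ioo (a - a/2) (a + a/2) ∈ nhds a :=
      Ioo_mem_nhds (by linarith) (by linarith)
    filter_upwards [hslope this] with z hz
    have hz' : slope h2 0 z ∈ Set.Ioo (a - a/2) (a + a/2) := hz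
    rw [Set.mem_Ioo] at hz'
    rw [abs_lt]; constructor <;> linarith [hz'.1, hz'.2]
  obtain ⟨ε, hεpos, hε⟩ := Metric.eventually_nhds_iff.mp (eventually_nhdsWithin_iff.mp hball)
  set δ₀ : ℝ := ε / 2 with hδ₀
  have hδ₀pos : 0 < δ₀ := by positivity
  have hh2b : ∀ z : ℝ, -δ₀ ≤ z → z ≤ 0 → (3*a/2) * z ≤ h2 z ∧ h2 z ≤ (a/2) * z := by
    intro z hz1 hz2
    rcases eq_or_lt_of_le hz2 with rfl | hz2'
    · simp [h20]
    · have hzne : z ∈ ({(0:ℝ)}ᶜ : Set ℝ) := by simp [ne_of_lt hz2']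
      have hdist : dist z 0 < ε := by
        rw [Real.dist_eq, sub_zero, abs_of_neg hz2']; rw [hδ₀] at hz1; linarith
      have := hε hdist hzne
      have hs : slope h2 0 z = h2 z / z := by
        rw [slope_def_field]; rw [h20]; ring_nf
      rw [hs, abs_lt] at this
      have h2eq : h2 z = (h2 z / z) * z := (div_mul_cancel₀ _ (ne_of_lt hz2')).symm
      constructor <;> nlinarith [this.1, this.2]
  -- integrability helpers
  have hcont2 : Continuous h2 := hsm2.continuous
  have hcont1 : Continuous h1 := hsm1.continuous
  have hconth : Continuous h := hsm0.continuous
  -- bound on h1 = deriv h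
  have hh1b : ∀ x : ℝ, -δ₀ ≤ x → x ≤ 0 → (a/4) * x^2 ≤ h1 x ∧ h1 x ≤ (3*a/4) * x^2 := by
    intro x hx1 hx2
    have key : ∫ z in x..(0:ℝ), h2 z = h1 0 - h1 x := by
      apply intervalIntegral.integral_deriv_eq_sub (fun t _ => hdiff1 t)
      exact hcont2.intervalIntegrable _ _
    have h10 : h1 0 = 0 := hd1
    have ilo : ∫ z in x..(0:ℝ), (3*a/2) * z ≤ ∫ z in x..(0:ℝ), h2 z := by
      apply intervalIntegral.integral_mono_on hx2
        ((continuous_const.mul continuous_id).intervalIntegrable _ _)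
        (hcont2.intervalIntegrable _ _)
      intro z hz
      exact (hh2b z (le_trans hx1 hz.1) hz.2).1
    have ihi : ∫ z in x..(0:ℝ), h2 z ≤ ∫ z in x..(0:ℝ), (a/2) * z := by
      apply intervalIntegral.integral_mono_on hx2
        (hcont2.intervalIntegrable _ _)
        ((continuous_const.mul continuous_id).intervalIntegrable _ _)
      intro z hz
      exact (hh2b z (le_trans hx1 hz.1) hz.2).2
    have v1 : ∫ z in x..(0:ℝ), (3*a/2) * z = -(3*a/4) * x^2 := by
      rw [intervalIntegral.integral_const_mul, integral_id]; ring
    have v2 : ∫ z in x..(0:ℝ), (a/2) * z = -(a/4) * x^2 := by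
      rw [intervalIntegral.integral_const_mul, integral_id]; ring
    rw [key, h10, v1] at ilo
    rw [key, h10, v2] at ihi
    constructor <;> linarith
  -- bound on h
  have hhb : ∀ x : ℝ, -δ₀ ≤ x → x ≤ 0 → (a/4) * x^3 ≤ h x ∧ h x ≤ (a/12) * x^3 := by
    intro x hx1 hx2
    have key : ∫ z in x..(0:ℝ), h1 z = h 0 - h x := by
      apply intervalIntegral.integral_deriv_eq_sub (fun t _ => hdiffh t)
      exact hcont1.intervalIntegrable _ _
    have ilo : ∫ z in x..(0:ℝ), (a/4) * z^2 ≤ ∫ z in x..(0:ℝ), h1 z := by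
      apply intervalIntegral.integral_mono_on hx2
        ((continuous_const.mul (continuous_pow 2)).intervalIntegrable _ _)
        (hcont1.intervalIntegrable _ _)
      intro z hz
      exact (hh1b z (le_trans hx1 hz.1) hz.2).1
    have ihi : ∫ z in x..(0:ℝ), h1 z ≤ ∫ z in x..(0:ℝ), (3*a/4) * z^2 := by
      apply intervalIntegral.integral_mono_on hx2
        (hcont1.intervalIntegrable _ _)
        ((continuous_const.mul (continuous_pow 2)).intervalIntegrable _ _)
      intro z hz
      exact (hh1b z (le_trans hx1 hz.1) hz.2).2
    have v1 : ∫ z in x..(0:ℝ), (a/4) * z^2 = -(a/12) * x^3 := by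
      rw [intervalIntegral.integral_const_mul, integral_pow]; norm_num; ring
    have v2 : ∫ z in x..(0:ℝ), (3*a/4) * z^2 = -(a/4) * x^3 := by
      rw [intervalIntegral.integral_const_mul, integral_pow]; norm_num; ring
    rw [key, h0, v1] at ilo
    rw [key, h0, v2] at ihi
    constructor <;> linarith
  -- bound on G
  have hGb : ∀ x : ℝ, -δ₀ ≤ x → x ≤ 0 → (a/48) * x^4 ≤ Gfun h x ∧ Gfun h x ≤ (a/16) * x^4 := by
    intro x hx1 hx2
    have key : Gfun h x = -∫ z in x..(0:ℝ), h z := by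
      rw [Gfun, intervalIntegral.integral_symm]
    have ilo : ∫ z in x..(0:ℝ), (a/4) * z^3 ≤ ∫ z in x..(0:ℝ), h z := by
      apply intervalIntegral.integral_mono_on hx2
        ((continuous_const.mul (continuous_pow 3)).intervalIntegrable _ _)
        (hconth.intervalIntegrable _ _)
      intro z hz
      exact (hhb z (le_trans hx1 hz.1) hz.2).1
    have ihi : ∫ z in x..(0:ℝ), h z ≤ ∫ z in x..(0:ℝ), (a/12) * z^3 := by
      apply intervalIntegral.integral_mono_on hx2
        (hconth.intervalIntegrable _ _)
        ((continuous_const.mul (continuous_pow 3)).intervalIntegrable _ _)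
      intro z hz
      exact (hhb z (le_trans hx1 hz.1) hz.2).2
    have v1 : ∫ z in x..(0:ℝ), (a/4) * z^3 = -(a/16) * x^4 := by
      rw [intervalIntegral.integral_const_mul, integral_pow]; norm_num; ring
    have v2 : ∫ z in x..(0:ℝ), (a/12) * z^3 = -(a/48) * x^4 := by
      rw [intervalIntegral.integral_const_mul, integral_pow]; norm_num; ring
    rw [v1] at ilo
    rw [v2] at ihi
    rw [key]
    constructor <;> linarith
  -- choose constants
  refine ⟨4, by norm_num, a/240, by positivity, a/6, by positivity,
    min δ₀ (1/(2*Real.sqrt a + 2)), lt_min hδ₀pos (by positivity), ?_⟩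
  intro M hM x y hmem hxδ hyδ
  set δ : ℝ := min δ₀ (1/(2*Real.sqrt a + 2)) with hδ
  obtain ⟨hMy, hx0, hy0⟩ := hmem
  simp only at hMy hx0 hy0
  -- basic facts about δ
  have hsq : Real.sqrt a > 0 := Real.sqrt_pos.mpr hapos
  have hsqa : Real.sqrt a * Real.sqrt a = a := Real.mul_self_sqrt hapos.le
  have hδpos : 0 < δ := lt_min hδ₀pos (by positivity)
  have hδle : δ ≤ 1/(2*Real.sqrt a + 2) := min_le_right _ _
  have hδa : a * δ^2 ≤ 1/4 := by
    have h1' : δ * (2*Real.sqrt a + 2) ≤ 1 := by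
      rw [le_div_iff₀ (by positivity : (0:ℝ) < 2*Real.sqrt a + 2)] at hδle
      linarith
    have hts : Real.sqrt a * δ ≤ 1/2 := by nlinarith [hδpos.le, hsq.le]
    have he : a * δ^2 = (Real.sqrt a * δ)^2 := by
      rw [mul_pow, Real.sq_sqrt hapos.le]
    rw [he]
    nlinarith [mul_nonneg hsq.le hδpos.le]
  have hxd0 : -δ₀ ≤ x := by
    have : |x| ≤ δ₀ := le_trans hxδ (min_le_left _ _)
    linarith [abs_le.mp this |>.1]
  have hx2δ : x^2 ≤ δ^2 := by
    have := abs_le.mp hxδ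
    nlinarith [this.1, this.2]
  -- the pointwise bounds
  obtain ⟨hg1, hg2⟩ := hGb x hxd0 hx0
  obtain ⟨hb1, hb2⟩ := hhb x hxd0 hx0
  obtain ⟨hd1', hd2'⟩ := hh1b x hxd0 hx0
  have hHeq0 : Hham h (x, y) = (1/2) * y^2 - Gfun h x + (1/2) * h x * y
      - (1/12) * h1 x * y^2 + (1/12) * (h x)^2 := rfl
  have hy4 : 4 * y^2 ≤ |Hham h (x, y)| := by
    have : 4 * y^2 ≤ M * y^2 := mul_le_mul_of_nonneg_right hM (sq_nonneg y)
    linarith [hMy]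
  exact thin_endgame a δ x y (Gfun h x) (h x) (h1 x) (Hham h (x, y)) hapos hδa hx0 hx2δ
    hg1 hg2 hb1 hb2 hd1' hd2' hy0 hy4 hHeq0
end
end
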